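/- arXiv:1810.03477 — 2 statements merged into one kernel-verified Lean document; each statement's English description precedes it below -/
import Mathlib

section
/- Let A ∈ ℝ^{d×k} have all rows of unit norm, and let V be a k-dimensional random vector with E[V] = 0 and covariance matrix I_k such that each component of AV is uniformly distributed on [-√3, √3]. Then the Pearson correlation matrix of AV equals AAᵀ, and hence AAᵀ is a Spearman's rho matrix. -/
/-!
Expanding the products and using `E[V_j V_l] = δ_jl` gives `E[(AV)_i (AV)_i'] = (A Aᵀ)_ii'`.
On `[-√3, √3]` the uniform cdf is affine, `F(x) = (x + √3) / (2√3)`, so for centred variables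
with this law `12 E[F(X) F(Y)] - 3 = E[XY]`. Pushing the law of `AV` forward to `ℝ^d` yields
the random vector witnessing that `A Aᵀ` is a Spearman's rho matrix.
-/

open MeasureTheory
open scoped Matrix

/-- The uniform (normalized Lebesgue) probability measure on the interval `[a, b]`. -/
noncomputable def uniformIcc (a b : ℝ) : Measure ℝ :=
  (ENNReal.ofReal (b - a))⁻¹ • volume.restrict (Set.Icc a b)

/-- `R` is a Spearman's rho matrix if there is a random vector `X` with continuous
marginal distributions whose matrix of pairwise Spearman rank correlations
`12 * E[F_i(X_i) F_j(X_j)] - 3` is `R`, where `F_i` is the cdf of `X_i`. -/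
def IsSpearmanMatrix {d : ℕ} (R : Matrix (Fin d) (Fin d) ℝ) : Prop :=
  ∃ (Ω : Type) (_ : MeasurableSpace Ω) (μ : Measure Ω) (_ : IsProbabilityMeasure μ)
    (X : Ω → Fin d → ℝ),
    (∀ i, Measurable fun ω => X ω i) ∧
    (∀ i (x : ℝ), Measure.map (fun ω => X ω i) μ {x} = 0) ∧
    ∀ i j, R i j =
      12 * (∫ ω, ProbabilityTheory.cdf (Measure.map (fun ω' => X ω' i) μ) (X ω i) *
        ProbabilityTheory.cdf (Measure.map (fun ω' => X ω' j) μ) (X ω j) ∂μ) - 3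

open ProbabilityTheory

section UniformIcc

variable {a b : ℝ}

lemma uniformIcc_apply {s : Set ℝ} (hs : MeasurableSet s) :
    uniformIcc a b s = (ENNReal.ofReal (b - a))⁻¹ * volume (s ∩ Set.Icc a b) := by
  simp [uniformIcc, Measure.restrict_apply hs]

lemma isProbabilityMeasure_uniformIcc (hab : a < b) : IsProbabilityMeasure (uniformIcc a b) :=
  ⟨by
    rw [uniformIcc_apply MeasurableSet.univ, Set.univ_inter, Real.volume_Icc]
    exact ENNReal.inv_mul_cancel (by simpa using hab) ENNReal.ofReal_ne_top⟩

lemma uniformIcc_singleton (x : ℝ) : uniformIcc a b {x} = 0 := by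
  simp [uniformIcc]

lemma cdf_uniformIcc (hab : a < b) {x : ℝ} (hx : x ∈ Set.Icc a b) :
    cdf (uniformIcc a b) x = (x - a) / (b - a) := by
  have := isProbabilityMeasure_uniformIcc hab
  have hIic : Set.Iic x ∩ Set.Icc a b = Set.Icc a x := by
    ext y
    simp only [Set.mem_inter_iff, Set.mem_Iic, Set.mem_Icc]
    constructor
    · rintro ⟨hyx, hay, -⟩; exact ⟨hay, hyx⟩
    · rintro ⟨hay, hyx⟩; exact ⟨hyx, hay, hyx.trans hx.2⟩
  rw [cdf_eq_real, measureReal_def, uniformIcc_apply measurableSet_Iic, hIic,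
    Real.volume_Icc, ENNReal.toReal_mul, ENNReal.toReal_inv,
    ENNReal.toReal_ofReal (by linarith), ENNReal.toReal_ofReal (by linarith [hx.1]),
    inv_mul_eq_div]

lemma ae_mem_Icc_of_map_eq_uniformIcc {Ω : Type*} [MeasurableSpace Ω] {μ : Measure Ω}
    {X : Ω → ℝ} (hX : AEMeasurable X μ) (hlaw : μ.map X = uniformIcc a b) :
    ∀ᵐ ω ∂μ, X ω ∈ Set.Icc a b := by
  refine ae_of_ae_map hX ?_
  rw [hlaw]
  exact Measure.ae_smul_measure (ae_restrict_mem measurableSet_Icc) _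

end UniformIcc

section SecondMoments

variable {Ω : Type*} [MeasurableSpace Ω] {μ : Measure Ω}

lemma integral_sum_mul_sum_of_orthonormal {ι : Type*} [Fintype ι] [DecidableEq ι]
    {V : Ω → ι → ℝ} (hV : ∀ j, MemLp (fun ω => V ω j) 2 μ)
    (hcov : ∀ j l, ∫ ω, V ω j * V ω l ∂μ = if j = l then 1 else 0) (a b : ι → ℝ) :
    ∫ ω, (∑ j, a j * V ω j) * (∑ l, b l * V ω l) ∂μ = ∑ j, a j * b j := by
  have hint : ∀ j l, Integrable (fun ω => a j * b l * (V ω j * V ω l)) μ :=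
    fun j l => ((hV j).integrable_mul (hV l)).const_mul _
  have hexpand : ∀ ω, (∑ j, a j * V ω j) * (∑ l, b l * V ω l)
      = ∑ j, ∑ l, a j * b l * (V ω j * V ω l) := fun ω => by
    simp only [Fintype.sum_mul_sum, mul_mul_mul_comm]
  simp_rw [hexpand]
  rw [integral_finsetSum _ fun j _ => integrable_finsetSum _ fun l _ => hint j l]
  simp_rw [integral_finsetSum _ fun l _ => hint _ l, integral_const_mul, hcov]
  simp

lemma integral_sum_mul_eq_zero {ι : Type*} [Fintype ι] {V : Ω → ι → ℝ}
    (hV : ∀ j, Integrable (fun ω => V ω j) μ) (hmean : ∀ j, ∫ ω, V ω j ∂μ = 0) (a : ι → ℝ) :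
    ∫ ω, ∑ j, a j * V ω j ∂μ = 0 := by
  rw [integral_finsetSum _ fun j _ => (hV j).const_mul _]
  simp [integral_const_mul, hmean]

end SecondMoments

section Spearman

variable {Ω : Type*} [MeasurableSpace Ω] {μ : Measure Ω}

/-- When `F_X(X)` and `F_Y(Y)` are uniform on `[0, 1]` (mean `1/2`, variance `1/12`), this is
their Pearson correlation. -/
noncomputable def spearmanRho (μ : Measure Ω) (X Y : Ω → ℝ) : ℝ :=
  12 * (∫ ω, cdf (μ.map X) (X ω) * cdf (μ.map Y) (Y ω) ∂μ) - 3

lemma spearmanRho_eq_integral_mul_of_uniformIcc [IsProbabilityMeasure μ] {X Y : Ω → ℝ}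
    (hX : MemLp X 2 μ) (hY : MemLp Y 2 μ)
    (hXlaw : μ.map X = uniformIcc (-√3) √3) (hYlaw : μ.map Y = uniformIcc (-√3) √3)
    (hXmean : ∫ ω, X ω ∂μ = 0) (hYmean : ∫ ω, Y ω ∂μ = 0) :
    spearmanRho μ X Y = ∫ ω, X ω * Y ω ∂μ := by
  have hpos : -√3 < √3 := by simp
  have hcdf : ∀ {Z : Ω → ℝ}, MemLp Z 2 μ → μ.map Z = uniformIcc (-√3) √3 →
      ∀ᵐ ω ∂μ, cdf (μ.map Z) (Z ω) = (Z ω + √3) / (2 * √3) := fun hZ hlaw => by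
    filter_upwards [ae_mem_Icc_of_map_eq_uniformIcc hZ.aestronglyMeasurable.aemeasurable hlaw]
      with ω hω
    rw [hlaw, cdf_uniformIcc hpos hω]
    ring_nf
  have h3 : √3 * √3 = 3 := Real.mul_self_sqrt (by norm_num)
  have hintegrand : (fun ω => cdf (μ.map X) (X ω) * cdf (μ.map Y) (Y ω))
      =ᵐ[μ] fun ω => (X ω * Y ω + (√3 * X ω + √3 * Y ω + 3)) / 12 := by
    filter_upwards [hcdf hX hXlaw, hcdf hY hYlaw] with ω hXω hYω
    have h12 : 2 * √3 * (2 * √3) = 12 := by linear_combination 4 * h3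
    rw [hXω, hYω, div_mul_div_comm, h12]
    linear_combination h3 / 12
  have hXint := hX.integrable one_le_two
  have hYint := hY.integrable one_le_two
  have hXY : Integrable (fun ω => X ω * Y ω) μ := hX.integrable_mul hY
  have hsX : Integrable (fun ω => √3 * X ω) μ := hXint.const_mul _
  have hsY : Integrable (fun ω => √3 * Y ω) μ := hYint.const_mul _
  have hlin : Integrable (fun ω => √3 * X ω + √3 * Y ω) μ := hsX.add hsY
  have hlin3 : Integrable (fun ω => √3 * X ω + √3 * Y ω + 3) μ := hlin.add (integrable_const 3)
  rw [spearmanRho, integral_congr_ae hintegrand, integral_div, integral_add hXY hlin3,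
    integral_add hlin (integrable_const 3), integral_add hsX hsY, integral_const_mul,
    integral_const_mul, hXmean, hYmean, integral_const]
  simp only [probReal_univ, smul_eq_mul]
  ring

lemma isSpearmanMatrix_of_spearmanRho [IsProbabilityMeasure μ] {d : ℕ} {R : Matrix (Fin d) (Fin d) ℝ} (X : Ω → Fin d → ℝ)
    (hX : ∀ i, AEMeasurable (fun ω => X ω i) μ) (hatom : ∀ i x, μ.map (fun ω => X ω i) {x} = 0)
    (hR : ∀ i j, R i j = spearmanRho μ (fun ω => X ω i) (fun ω => X ω j)) :
    IsSpearmanMatrix R := by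
  have hXvec : AEMeasurable X μ := aemeasurable_pi_lambda X hX
  have hmarginal : ∀ i, (μ.map X).map (fun x => x i) = μ.map (fun ω => X ω i) := fun i =>
    AEMeasurable.map_map_of_aemeasurable (measurable_pi_apply i).aemeasurable hXvec
  refine ⟨Fin d → ℝ, inferInstance, μ.map X, Measure.isProbabilityMeasure_map hXvec, id,
    measurable_pi_apply, fun i x => by simpa [hmarginal] using hatom i x, fun i j => ?_⟩
  simp only [id_eq, hmarginal]
  rw [integral_map hXvec, ← spearmanRho, hR]
  exact (((monotone_cdf _).measurable.comp (measurable_pi_apply i)).mul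
    ((monotone_cdf _).measurable.comp (measurable_pi_apply j))).aestronglyMeasurable

end Spearman

theorem pearson_of_uniform_projections_general {Ω : Type*} [MeasurableSpace Ω] (μ : Measure Ω)
    [IsProbabilityMeasure μ] {d k : ℕ} (A : Matrix (Fin d) (Fin k) ℝ)
    (V : Ω → Fin k → ℝ)
    (hVL2 : ∀ j, MemLp (fun ω => V ω j) 2 μ)
    (hmean : ∀ j, (∫ ω, V ω j ∂μ) = 0)
    (hcov : ∀ j l, (∫ ω, V ω j * V ω l ∂μ) = if j = l then 1 else 0)
    (huni : ∀ i : Fin d,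
      Measure.map (fun ω => ∑ j : Fin k, A i j * V ω j) μ
        = uniformIcc (-Real.sqrt 3) (Real.sqrt 3)) :
    (∀ i i' : Fin d,
      (∫ ω, (∑ j : Fin k, A i j * V ω j) * (∑ j : Fin k, A i' j * V ω j) ∂μ)
        = (A * Aᵀ) i i') ∧
    IsSpearmanMatrix (A * Aᵀ) := by
  have hpearson : ∀ i i' : Fin d,
      ∫ ω, (∑ j, A i j * V ω j) * (∑ j, A i' j * V ω j) ∂μ = (A * Aᵀ) i i' := fun i i' =>
    integral_sum_mul_sum_of_orthonormal hVL2 hcov (A i) (A i')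
  have hL2 : ∀ i, MemLp (fun ω => ∑ j, A i j * V ω j) 2 μ := fun i =>
    memLp_finsetSum _ fun j _ => (hVL2 j).const_mul _
  have hcentered : ∀ i, ∫ ω, ∑ j, A i j * V ω j ∂μ = 0 := fun i =>
    integral_sum_mul_eq_zero (fun j => (hVL2 j).integrable one_le_two) hmean (A i)
  refine ⟨hpearson, isSpearmanMatrix_of_spearmanRho (fun ω i => ∑ j, A i j * V ω j)
    (fun i => (hL2 i).aestronglyMeasurable.aemeasurable)
    (fun i x => by rw [huni]; exact uniformIcc_singleton x) fun i i' => ?_⟩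
  rw [spearmanRho_eq_integral_mul_of_uniformIcc (hL2 i) (hL2 i') (huni i) (huni i')
    (hcentered i) (hcentered i'), hpearson]

/-- If A has unit-norm rows and V has mean 0 and covariance I_k with each component of AV
uniform on [-√3, √3], then the Pearson correlation matrix of AV is AAᵀ, and AAᵀ is
a Spearman's rho matrix. -/
theorem pearson_of_uniform_projections {Ω : Type*} [MeasurableSpace Ω] (μ : Measure Ω)
    [IsProbabilityMeasure μ] {d k : ℕ} (A : Matrix (Fin d) (Fin k) ℝ)
    (hArows : ∀ i, ∑ j : Fin k, (A i j) ^ 2 = 1)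
    (V : Ω → Fin k → ℝ) (hVmeas : ∀ j, Measurable fun ω => V ω j)
    (hVL2 : ∀ j, MemLp (fun ω => V ω j) 2 μ)
    (hmean : ∀ j, (∫ ω, V ω j ∂μ) = 0)
    (hcov : ∀ j l, (∫ ω, V ω j * V ω l ∂μ) = if j = l then 1 else 0)
    (huni : ∀ i : Fin d,
      Measure.map (fun ω => ∑ j : Fin k, A i j * V ω j) μ
        = uniformIcc (-Real.sqrt 3) (Real.sqrt 3)) :
    (∀ i i' : Fin d,
      (∫ ω, (∑ j : Fin k, A i j * V ω j) * (∑ j : Fin k, A i' j * V ω j) ∂μ)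
        = (A * Aᵀ) i i') ∧
    IsSpearmanMatrix (A * Aᵀ) :=
  pearson_of_uniform_projections_general μ A V hVL2 hmean hcov huni
end

section
/- The Gram matrix M of the twelve vectors a₁ = e₁, ..., a₄ = e₄ (standard basis of ℝ^4) and a₅,...,a₁₂ = (1/2)(1, ±1, ±1, ±1) is a standardized symmetric positive semidefinite matrix that is not a Spearman's rho matrix. In particular, the set of 12 × 12 Spearman's rho matrices is a proper subset of the set of 12 × 12 standardized symmetric positive semidefinite matrices. -/
open MeasureTheory
open scoped Matrix

noncomputable def paperVecs : Matrix (Fin 12) (Fin 4) ℝ :=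
  !![1, 0, 0, 0;
     0, 1, 0, 0;
     0, 0, 1, 0;
     0, 0, 0, 1;
     1/2,  1/2,  1/2,  1/2;
     1/2,  1/2,  1/2, -1/2;
     1/2,  1/2, -1/2,  1/2;
     1/2,  1/2, -1/2, -1/2;
     1/2, -1/2,  1/2,  1/2;
     1/2, -1/2,  1/2, -1/2;
     1/2, -1/2, -1/2,  1/2;
     1/2, -1/2, -1/2, -1/2]

/-- The Gram matrix of the twelve vectors. -/
noncomputable def gramM : Matrix (Fin 12) (Fin 12) ℝ := paperVecs * paperVecsᵀ

open ProbabilityTheory Set Filter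

/-!
If `R` is a Spearman's rho matrix, the centred ranks `U i = F_i(X_i) - 1/2` are uniform on
`[-1/2, 1/2]` and `R = 12 E[U Uᵀ]`; in particular `R` is positive semidefinite with unit diagonal.
If `R = M = A Aᵀ`, where the first four rows of `A` are the standard basis of `ℝ⁴`, these second
moments force `U k = a_k ⬝ V` almost surely with `V = (U 0, …, U 3)`. The twelve vectors satisfy
`∑ k, (a_k ⬝ v)^4 = 3/2 ‖v‖^4`, so that
`12/80 = ∑ k, E[U k ^ 4] = 3/2 E[‖V‖^4] ≥ 3/2 E[‖V‖^2]^2 = 3/2 (4/12)^2 = 1/6`, which is absurd.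
-/

theorem Monotone.exists_preimage_Iic_eq_Iic {α β : Type*} [ConditionallyCompleteLinearOrder α]
    [TopologicalSpace α] [OrderTopology α] [DenselyOrdered α] [LinearOrder β]
    [TopologicalSpace β] [OrderClosedTopology β] {F : α → β} (hmono : Monotone F)
    (hcont : Continuous F) {t : β} {x y : α} (hx : F x ≤ t) (hy : t < F y) :
    ∃ a, F a = t ∧ F ⁻¹' Iic t = Iic a := by
  set S := F ⁻¹' Iic t
  have hbdd : BddAbove S := ⟨y, fun z hz => (hmono.reflect_lt (lt_of_le_of_lt hz hy)).le⟩
  have ha : sSup S ∈ S := (isClosed_Iic.preimage hcont).csSup_mem ⟨x, hx⟩ hbdd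
  have hay : sSup S ≤ y := (hmono.reflect_lt (lt_of_le_of_lt ha hy)).le
  obtain ⟨c, ⟨hac, -⟩, hc⟩ := intermediate_value_Icc hay hcont.continuousOn ⟨ha, hy.le⟩
  have hca : c ≤ sSup S := le_csSup hbdd (show F c ≤ t from hc.le)
  refine ⟨sSup S, le_antisymm hac hca ▸ hc, ?_⟩
  exact Subset.antisymm (fun z hz => le_csSup hbdd hz) fun z hz => (hmono hz).trans ha

namespace ProbabilityTheory

variable (ν : Measure ℝ) [IsProbabilityMeasure ν] [NullSingletonClass ν]

theorem continuous_cdf : Continuous (cdf ν) := by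
  refine continuous_iff_continuousAt.2 fun x => ?_
  rw [(monotone_cdf ν).continuousAt_iff_leftLim_eq_rightLim, StieltjesFunction.rightLim_eq]
  have h := (cdf ν).measure_singleton x
  rw [measure_cdf, measure_singleton, eq_comm, ENNReal.ofReal_eq_zero, sub_nonpos] at h
  exact le_antisymm ((monotone_cdf ν).leftLim_le le_rfl) h

theorem measure_preimage_cdf_Iic {t : ℝ} (ht : t < 1) :
    ν (cdf ν ⁻¹' Iic t) = ENNReal.ofReal t := by
  obtain ⟨y, hy⟩ := ((tendsto_cdf_atTop ν).eventually_const_lt ht).exists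
  by_cases hx : ∃ x, cdf ν x ≤ t
  · obtain ⟨x, hx⟩ := hx
    obtain ⟨a, hFa, hS⟩ := (monotone_cdf ν).exists_preimage_Iic_eq_Iic (continuous_cdf ν) hx hy
    rw [hS, ← ofReal_cdf, hFa]
  · push Not at hx
    have hS : cdf ν ⁻¹' Iic t = ∅ := eq_empty_of_forall_notMem fun x hx' => (hx x).not_ge hx'
    have ht₀ : t ≤ 0 :=
      ge_of_tendsto (tendsto_cdf_atBot ν) (Eventually.of_forall fun x => (hx x).le)
    rw [hS, measure_empty, ENNReal.ofReal_of_nonpos ht₀]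

theorem map_cdf_eq_restrict_Icc : ν.map (cdf ν) = volume.restrict (Icc 0 1) := by
  have hmeas : Measurable (cdf ν) := (monotone_cdf ν).measurable
  have : IsProbabilityMeasure (ν.map (cdf ν)) :=
    Measure.isProbabilityMeasure_map hmeas.aemeasurable
  refine Measure.ext_of_Iic _ _ fun t => ?_
  have hI : Iic t ∩ Icc 0 1 = Icc 0 (min t 1) := by
    ext x; simp only [mem_inter_iff, mem_Iic, mem_Icc, le_min_iff]; tauto
  rw [Measure.map_apply hmeas measurableSet_Iic, Measure.restrict_apply measurableSet_Iic, hI,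
    Real.volume_Icc, sub_zero]
  rcases lt_or_ge t 1 with ht | ht
  · rw [measure_preimage_cdf_Iic ν ht, min_eq_left ht.le]
  · have hS : cdf ν ⁻¹' Iic t = univ := eq_univ_of_forall fun x => (cdf_le_one ν x).trans ht
    rw [hS, measure_univ, min_eq_right ht, ENNReal.ofReal_one]

end ProbabilityTheory

theorem integral_comp_cdf_map {Ω : Type*} [MeasurableSpace Ω] {μ : Measure Ω}
    [IsProbabilityMeasure μ] {f : Ω → ℝ} (hf : Measurable f) [NullSingletonClass (μ.map f)]
    {g : ℝ → ℝ} (hg : Measurable g) :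
    ∫ ω, g (cdf (μ.map f) (f ω)) ∂μ = ∫ x in Icc 0 1, g x := by
  have : IsProbabilityMeasure (μ.map f) := Measure.isProbabilityMeasure_map hf.aemeasurable
  have hF : Measurable (cdf (μ.map f)) := (monotone_cdf _).measurable
  rw [← map_cdf_eq_restrict_Icc (μ.map f), Measure.map_map hF hf,
    integral_map (hF.comp hf).aemeasurable hg.aestronglyMeasurable]
  rfl

theorem integral_Icc_sub_half_pow (n : ℕ) :
    ∫ x in Icc (0 : ℝ) 1, (x - 1 / 2) ^ n =
      ((1 / 2) ^ (n + 1) - (-1 / 2) ^ (n + 1)) / (n + 1) := by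
  rw [integral_Icc_eq_integral_Ioc, ← intervalIntegral.integral_of_le zero_le_one,
    intervalIntegral.integral_comp_sub_right (· ^ n)]
  norm_num [integral_pow]

section SecondMomentMatrix

variable {Ω ι : Type*} [MeasurableSpace Ω] [Fintype ι] {μ : Measure Ω} {U : ι → Ω → ℝ}

noncomputable def secondMomentMatrix (U : ι → Ω → ℝ) (μ : Measure Ω) : Matrix ι ι ℝ :=
  Matrix.of fun i j => ∫ ω, U i ω * U j ω ∂μ

theorem integral_sq_sum_eq_dotProduct_secondMomentMatrix (hU : ∀ i, MemLp (U i) 2 μ)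
    (c : ι → ℝ) : ∫ ω, (∑ i, c i * U i ω) ^ 2 ∂μ = c ⬝ᵥ secondMomentMatrix U μ *ᵥ c := by
  have hint (i j : ι) : Integrable (fun ω => c i * c j * (U i ω * U j ω)) μ :=
    ((hU i).integrable_mul (hU j)).const_mul _
  calc ∫ ω, (∑ i, c i * U i ω) ^ 2 ∂μ = ∫ ω, ∑ i, ∑ j, c i * c j * (U i ω * U j ω) ∂μ := by
        congr with ω
        rw [sq, Finset.sum_mul_sum]
        exact Finset.sum_congr rfl fun i _ => Finset.sum_congr rfl fun j _ => by ring
    _ = ∑ i, ∑ j, c i * c j * ∫ ω, U i ω * U j ω ∂μ := by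
        rw [integral_finsetSum _ fun i _ => integrable_finsetSum _ fun j _ => hint i j]
        refine Finset.sum_congr rfl fun i _ => ?_
        rw [integral_finsetSum _ fun j _ => hint i j]
        exact Finset.sum_congr rfl fun j _ => integral_const_mul _ _
    _ = _ := by
        simp only [dotProduct, Matrix.mulVec, secondMomentMatrix, Matrix.of_apply,
          Finset.mul_sum]
        exact Finset.sum_congr rfl fun i _ => Finset.sum_congr rfl fun j _ => by ring

theorem posSemidef_secondMomentMatrix (hU : ∀ i, MemLp (U i) 2 μ) :
    (secondMomentMatrix U μ).PosSemidef := by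
  refine .of_dotProduct_mulVec_nonneg ?_ fun c => ?_
  · ext i j
    simp only [Matrix.conjTranspose_apply, secondMomentMatrix, Matrix.of_apply, star_trivial,
      mul_comm]
  · rw [star_trivial, ← integral_sq_sum_eq_dotProduct_secondMomentMatrix hU]
    exact integral_nonneg fun ω => sq_nonneg _

theorem sum_mul_ae_eq_zero_of_secondMomentMatrix_mulVec_eq_zero (hU : ∀ i, MemLp (U i) 2 μ)
    {c : ι → ℝ} (hc : secondMomentMatrix U μ *ᵥ c = 0) :
    (fun ω => ∑ i, c i * U i ω) =ᵐ[μ] 0 := by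
  have hmem : MemLp (fun ω => ∑ i, c i * U i ω) 2 μ :=
    memLp_finsetSum _ fun i _ => (hU i).const_mul (c i)
  have h := integral_sq_sum_eq_dotProduct_secondMomentMatrix hU c
  rw [hc, dotProduct_zero,
    integral_eq_zero_iff_of_nonneg (fun ω => sq_nonneg _) hmem.integrable_sq] at h
  filter_upwards [h] with ω hω
  exact pow_eq_zero_iff two_ne_zero |>.1 hω

theorem ae_eq_mulVec_of_secondMomentMatrix_eq_smul_mul_transpose {κ : Type*} [Fintype κ]
    [DecidableEq ι] [DecidableEq κ] (hU : ∀ i, MemLp (U i) 2 μ) {A : Matrix ι κ ℝ} {s : ℝ}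
    (hS : secondMomentMatrix U μ = s • (A * Aᵀ)) {e : κ → ι} (he : ∀ j, A (e j) = Pi.single j 1)
    (k : ι) : U k =ᵐ[μ] fun ω => (A *ᵥ fun j => U (e j) ω) k := by
  -- the coefficients of `U k - ∑ j, A k j * U (e j)`; they lie in the kernel of `Aᵀ`
  set c : ι → ℝ := Pi.single k 1 - ∑ j, A k j • Pi.single (e j) 1
  have hAc : Aᵀ *ᵥ c = 0 := by
    ext l
    simp [c, Matrix.mulVec_sub, Matrix.mulVec_sum, Matrix.mulVec_smul, he, Pi.single_apply]
  have hSc : secondMomentMatrix U μ *ᵥ c = 0 := by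
    rw [hS, Matrix.smul_mulVec, ← Matrix.mulVec_mulVec, hAc, Matrix.mulVec_zero, smul_zero]
  filter_upwards [sum_mul_ae_eq_zero_of_secondMomentMatrix_mulVec_eq_zero hU hSc] with ω hω
  simp only [c, Pi.sub_apply, Pi.single_apply, Finset.sum_apply, Pi.smul_apply, smul_eq_mul,
    mul_ite, mul_one, mul_zero, sub_mul, ite_mul, one_mul, zero_mul, Finset.sum_mul,
    Finset.sum_sub_distrib, Finset.sum_ite_eq', Finset.mem_univ, if_true, Pi.zero_apply] at hω
  rw [Finset.sum_comm] at hω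
  simpa [sub_eq_zero, Matrix.mulVec, dotProduct] using hω

end SecondMomentMatrix

namespace IsSpearmanMatrix

variable {d : ℕ} {R : Matrix (Fin d) (Fin d) ℝ}

theorem exists_eq_smul_secondMomentMatrix (h : IsSpearmanMatrix R) :
    ∃ (Ω : Type) (_ : MeasurableSpace Ω) (μ : Measure Ω) (_ : IsProbabilityMeasure μ)
      (U : Fin d → Ω → ℝ), (∀ i, MemLp (U i) ⊤ μ) ∧
      (∀ i (n : ℕ), ∫ ω, U i ω ^ n ∂μ = ∫ x in Icc (0 : ℝ) 1, (x - 1 / 2) ^ n) ∧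
      R = (12 : ℝ) • secondMomentMatrix U μ := by
  obtain ⟨Ω, _, μ, hμ, X, hX, hX₀, hR⟩ := h
  set F : Fin d → Ω → ℝ := fun i ω => cdf (μ.map fun ω' => X ω' i) (X ω i)
  have hF (i : Fin d) : Measurable (F i) := (monotone_cdf _).measurable.comp (hX i)
  have hF₀₁ (i : Fin d) (ω : Ω) : 0 ≤ F i ω ∧ F i ω ≤ 1 := ⟨cdf_nonneg _ _, cdf_le_one _ _⟩
  have hlaw (i : Fin d) {g : ℝ → ℝ} (hg : Measurable g) :
      ∫ ω, g (F i ω) ∂μ = ∫ x in Icc 0 1, g x := by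
    have : NullSingletonClass (μ.map fun ω => X ω i) := ⟨hX₀ i⟩
    exact integral_comp_cdf_map (μ := μ) (hX i) hg
  refine ⟨Ω, _, μ, hμ, fun i ω => F i ω - 1 / 2,
    fun i => memLp_top_of_bound ((hF i).sub_const _).aestronglyMeasurable (1 / 2) (ae_of_all _
      fun ω => abs_le.2 ⟨by linarith [hF₀₁ i ω], by linarith [hF₀₁ i ω]⟩),
    fun i n => hlaw i (g := (· - 1 / 2) ^ n) (by fun_prop), ?_⟩
  have hF2 (i : Fin d) : MemLp (F i) 2 μ :=
    .of_bound (hF i).aestronglyMeasurable 1 (ae_of_all _ fun ω => by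
      rw [Real.norm_eq_abs, abs_of_nonneg (hF₀₁ i ω).1]; exact (hF₀₁ i ω).2)
  have hmean (i : Fin d) : ∫ ω, F i ω ∂μ = 1 / 2 := by
    rw [hlaw i (g := fun x => x) measurable_id, integral_Icc_eq_integral_Ioc,
      ← intervalIntegral.integral_of_le zero_le_one, integral_id]
    norm_num
  ext i j
  have hcov := covariance_eq_sub (hF2 i) (hF2 j)
  rw [covariance, hmean, hmean] at hcov
  simp only [Pi.mul_apply] at hcov
  rw [hR i j, Matrix.smul_apply, secondMomentMatrix, Matrix.of_apply, smul_eq_mul, hcov]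
  ring

theorem posSemidef (h : IsSpearmanMatrix R) : R.PosSemidef := by
  obtain ⟨Ω, _, μ, _, U, hU, -, hR⟩ := h.exists_eq_smul_secondMomentMatrix
  rw [hR]
  exact (posSemidef_secondMomentMatrix fun i => (hU i).mono_exponent le_top).smul (by norm_num)

theorem apply_self (h : IsSpearmanMatrix R) (i : Fin d) : R i i = 1 := by
  obtain ⟨Ω, _, μ, _, U, -, hmom, hR⟩ := h.exists_eq_smul_secondMomentMatrix
  rw [hR, Matrix.smul_apply, secondMomentMatrix, Matrix.of_apply]
  simp only [← sq, hmom, integral_Icc_sub_half_pow]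
  norm_num

end IsSpearmanMatrix

theorem paperVecs_castLE (j : Fin 4) :
    paperVecs (Fin.castLE (by norm_num) j) = Pi.single j 1 := by
  ext l; fin_cases j <;> fin_cases l <;> simp [paperVecs]

theorem gramM_apply_self (i : Fin 12) : gramM i i = 1 := by
  fin_cases i <;> norm_num [gramM, paperVecs, Matrix.mul_apply, Fin.sum_univ_succ]

theorem sum_paperVecs_mulVec_pow_four (v : Fin 4 → ℝ) :
    ∑ k, (paperVecs *ᵥ v) k ^ 4 = 3 / 2 * (v ⬝ᵥ v) ^ 2 := by
  simp only [Fin.sum_univ_succ, Fin.sum_univ_zero, Matrix.mulVec, dotProduct, paperVecs,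
    Matrix.of_apply, Matrix.cons_val_zero, Matrix.cons_val_succ]
  ring

theorem sq_sum_integral_sq_le_sum_integral_paperVecs_mulVec_pow_four {Ω : Type*}
    [MeasurableSpace Ω] {μ : Measure Ω} [IsProbabilityMeasure μ] {V : Fin 4 → Ω → ℝ}
    (hV : ∀ j, MemLp (V j) 4 μ) :
    3 / 2 * (∑ j, ∫ ω, V j ω ^ 2 ∂μ) ^ 2 ≤
      ∑ k, ∫ ω, (paperVecs *ᵥ fun j => V j ω) k ^ 4 ∂μ := by
  set Q : Ω → ℝ := fun ω => (fun j => V j ω) ⬝ᵥ (fun j => V j ω)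
  have hV2 (j : Fin 4) : Integrable (fun ω => V j ω ^ 2) μ :=
    ((hV j).mono_exponent (by norm_num)).integrable_sq
  have hW4 (k : Fin 12) : Integrable (fun ω => (paperVecs *ᵥ fun j => V j ω) k ^ 4) μ := by
    have hW : MemLp (fun ω => (paperVecs *ᵥ fun j => V j ω) k) 4 μ :=
      memLp_finsetSum Finset.univ fun j _ => (hV j).const_mul (paperVecs k j)
    simpa [Real.norm_eq_abs, Even.pow_abs (by decide : Even 4)] using
      hW.integrable_norm_pow (p := 4) (by norm_num)
  have hQ2 : MemLp Q 2 μ := by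
    refine (memLp_two_iff_integrable_sq ?_).2 ?_
    · exact Finset.aestronglyMeasurable_fun_sum _ fun j _ =>
        (hV j).aestronglyMeasurable.mul (hV j).aestronglyMeasurable
    refine ((integrable_finsetSum Finset.univ fun k _ => hW4 k).const_mul (2 / 3)).congr
      (ae_of_all _ fun ω => ?_)
    simp only [sum_paperVecs_mulVec_pow_four, Q]
    ring
  have hQ : ∫ ω, Q ω ∂μ = ∑ j, ∫ ω, V j ω ^ 2 ∂μ := by
    simp only [Q, dotProduct, ← sq]
    exact integral_finsetSum _ fun j _ => hV2 j
  calc 3 / 2 * (∑ j, ∫ ω, V j ω ^ 2 ∂μ) ^ 2 ≤ 3 / 2 * ∫ ω, Q ω ^ 2 ∂μ := by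
        have := variance_nonneg Q μ
        rw [variance_eq_sub hQ2, sub_nonneg, hQ] at this
        exact mul_le_mul_of_nonneg_left this (by norm_num)
    _ = ∑ k, ∫ ω, (paperVecs *ᵥ fun j => V j ω) k ^ 4 ∂μ := by
        rw [← integral_const_mul, ← integral_finsetSum _ fun k _ => hW4 k]
        simp only [sum_paperVecs_mulVec_pow_four, Q]

theorem not_isSpearmanMatrix_gramM : ¬ IsSpearmanMatrix gramM := by
  intro h
  obtain ⟨Ω, _, μ, _, U, hU, hmom, hR⟩ := h.exists_eq_smul_secondMomentMatrix
  have hS : secondMomentMatrix U μ = (1 / 12 : ℝ) • (paperVecs * paperVecsᵀ) := by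
    rw [← gramM, hR, smul_smul]; norm_num
  have hrow := ae_eq_mulVec_of_secondMomentMatrix_eq_smul_mul_transpose
    (fun i => (hU i).mono_exponent le_top) hS paperVecs_castLE
  have h4 (k : Fin 12) :
      ∫ ω, (paperVecs *ᵥ fun j => U (Fin.castLE (by norm_num) j) ω) k ^ 4 ∂μ = 1 / 80 := by
    have hk : (fun ω => U k ω ^ 4) =ᵐ[μ]
        fun ω => (paperVecs *ᵥ fun j => U (Fin.castLE (by norm_num) j) ω) k ^ 4 :=
      (hrow k).fun_comp (· ^ 4)
    rw [← integral_congr_ae hk, hmom, integral_Icc_sub_half_pow]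
    norm_num
  have key := sq_sum_integral_sq_le_sum_integral_paperVecs_mulVec_pow_four
    (V := fun j => U (Fin.castLE (by norm_num) j)) fun j => (hU _).mono_exponent le_top
  simp only [h4, hmom, integral_Icc_sub_half_pow] at key
  norm_num at key

/-- The Gram matrix M is standardized symmetric positive semidefinite but not a Spearman's
rho matrix; hence the 12 × 12 Spearman's rho matrices form a proper subset of the
standardized symmetric positive semidefinite matrices. -/
theorem gramM_not_spearman :
    gramM.PosSemidef ∧ (∀ i, gramM i i = 1) ∧ ¬ IsSpearmanMatrix gramM ∧
    {R : Matrix (Fin 12) (Fin 12) ℝ | IsSpearmanMatrix R}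
      ⊂ {R : Matrix (Fin 12) (Fin 12) ℝ | R.PosSemidef ∧ ∀ i, R i i = 1} := by
  have hpsd : gramM.PosSemidef := by
    simpa [gramM, Matrix.conjTranspose_eq_transpose_of_trivial] using
      paperVecs.posSemidef_self_mul_conjTranspose
  refine ⟨hpsd, gramM_apply_self, not_isSpearmanMatrix_gramM, (Set.ssubset_iff_of_subset ?_).2
    ⟨gramM, ⟨hpsd, gramM_apply_self⟩, not_isSpearmanMatrix_gramM⟩⟩
  exact fun R hR => ⟨hR.posSemidef, hR.apply_self⟩
end
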